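/- The group homomorphism B(G₂) → B₁₃ᵇʳ determined by x ↦ us and y ↦ (us)·t·(us)⁻¹ (equivalently y ↦ u s t s⁻¹ u⁻¹) is well defined and is a group isomorphism; its inverse is the homomorphism B₁₃ᵇʳ → B(G₂) determined by s ↦ y·x·(y·x·y)⁻¹·x, t ↦ x⁻¹·y·x, and u ↦ (x·y·x)⁻¹·y·(x·y·x). -/

import Mathlib

noncomputable section

/-- The defining relators of the braid group of `G₁₃`: generators `s, t, u`
(indexed `0, 1, 2`) and relations `tust = ustu` and `stust = ustus`. -/
def b13rels : Set (FreeGroup (Fin 3)) :=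
  { FreeGroup.of 1 * FreeGroup.of 2 * FreeGroup.of 0 * FreeGroup.of 1 *
      (FreeGroup.of 2 * FreeGroup.of 0 * FreeGroup.of 1 * FreeGroup.of 2)⁻¹,
    FreeGroup.of 0 * FreeGroup.of 1 * FreeGroup.of 2 * FreeGroup.of 0 * FreeGroup.of 1 *
      (FreeGroup.of 2 * FreeGroup.of 0 * FreeGroup.of 1 * FreeGroup.of 2 * FreeGroup.of 0)⁻¹ }

/-- The braid group `B₁₃ᵇʳ` of the complex reflection group `G₁₃`. -/
abbrev B13br := PresentedGroup b13rels

/-- The braid generator `s`. -/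
def bs : B13br := PresentedGroup.of 0
/-- The braid generator `t`. -/
def bt : B13br := PresentedGroup.of 1
/-- The braid generator `u`. -/
def bu : B13br := PresentedGroup.of 2


/-- The defining relator of the Artin group of type `I₂(6)` (the braid group of the Weyl
group `G₂`): generators `x, y` (indexed `0, 1`) and the relation `xyxyxy = yxyxyx`. -/
def bG2rels : Set (FreeGroup (Fin 2)) :=
  { FreeGroup.of 0 * FreeGroup.of 1 * FreeGroup.of 0 * FreeGroup.of 1 * FreeGroup.of 0 *
      FreeGroup.of 1 *
      (FreeGroup.of 1 * FreeGroup.of 0 * FreeGroup.of 1 * FreeGroup.of 0 * FreeGroup.of 1 *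
        FreeGroup.of 0)⁻¹ }

/-- The braid group `B(G₂)` of the Weyl group `G₂`, i.e. the Artin group of type `I₂(6)`. -/
abbrev BG2 := PresentedGroup bG2rels

/-- The generator `x` of `B(G₂)`. -/
def gx : BG2 := PresentedGroup.of 0
/-- The generator `y` of `B(G₂)`. -/
def gy : BG2 := PresentedGroup.of 1

/-! Writing `x = us`, the first relation of `B₁₃ᵇʳ` says `u = (xt)⁻¹(txt)`, and given it the second
becomes `(xt)³ = (tx)³`; so `B₁₃ᵇʳ = ⟨x, t ∣ xtxtxt = txtxtx⟩`, which is `B(G₂)` after renaming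
`t` to its conjugate `y = xtx⁻¹`. -/

section

variable {G : Type*} [Group G]

theorem braid6_iff_of_mul_eq {x y t : G} (hy : y * x = x * t) :
    x * y * x * y * x * y = y * x * y * x * y * x ↔
      x * t * x * t * x * t = t * x * t * x * t * x := by
  obtain rfl : y = x * t * x⁻¹ := by rw [← hy]; group
  constructor <;> intro h
  · calc x * t * x * t * x * t
        = x⁻¹ * (x * (x * t * x⁻¹) * x * (x * t * x⁻¹) * x * (x * t * x⁻¹)) * x := by group
      _ = t * x * t * x * t * x := by rw [h]; group
  · calc x * (x * t * x⁻¹) * x * (x * t * x⁻¹) * x * (x * t * x⁻¹)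
        = x * (x * t * x * t * x * t) * x⁻¹ := by group
      _ = x * t * x⁻¹ * x * (x * t * x⁻¹) * x * (x * t * x⁻¹) * x := by rw [h]; group

theorem b13_relations_iff {s t u x : G} (hx : u * s = x) :
    (t * u * s * t = u * s * t * u ∧ s * t * u * s * t = u * s * t * u * s) ↔
      (x * t * u = t * x * t ∧ x * t * x * t * x * t = t * x * t * x * t * x) := by
  subst hx
  have hR₁ : t * u * s * t = u * s * t * u ↔ u * s * t * u = t * (u * s) * t := by
    simp only [mul_assoc, eq_comm]
  rw [hR₁]
  refine and_congr_right fun h₁ => ⟨fun h₂ => ?_, fun h => ?_⟩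
  · calc u * s * t * (u * s) * t * (u * s) * t = (u * s * t * u) * (s * t * u * s * t) := by group
      _ = t * (u * s) * t * (u * s) * t * (u * s) := by rw [h₁, h₂]; group
  · calc s * t * u * s * t = (t * (u * s) * t)⁻¹ * (u * s * t * u) * (s * t * u * s * t) := by
          rw [h₁]; group
      _ = (t * (u * s) * t)⁻¹ * (u * s * t * (u * s) * t * (u * s) * t) := by group
      _ = u * s * t * u * s := by rw [h]; group

theorem braid6_of_b13_relations {s t u x y : G} (h₁ : t * u * s * t = u * s * t * u)
    (h₂ : s * t * u * s * t = u * s * t * u * s) (hx : x = u * s) (hy : y = u * s * t * (u * s)⁻¹) :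
    x * y * x * y * x * y = y * x * y * x * y * x :=
  (braid6_iff_of_mul_eq (by rw [hy, hx]; group)).mpr ((b13_relations_iff hx.symm).mp ⟨h₁, h₂⟩).2

theorem b13_generators_eq_of_relations {s t u x y : G} (h₁ : t * u * s * t = u * s * t * u)
    (h₂ : s * t * u * s * t = u * s * t * u * s) (hx : x = u * s) (hy : y = u * s * t * (u * s)⁻¹) :
    y * x * (y * x * y)⁻¹ * x = s ∧ x⁻¹ * y * x = t ∧ (x * y * x)⁻¹ * y * (x * y * x) = u := by
  subst hx hy
  refine ⟨?_, by group, ?_⟩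
  · calc _ = (u * s * t * u * s) * (t⁻¹ * s⁻¹ * u⁻¹ * t⁻¹) := by group
      _ = s := by rw [← h₂]; group
  · calc _ = (t⁻¹ * s⁻¹ * u⁻¹) * (t * u * s * t) := by group
      _ = u := by rw [h₁]; group

variable {x y s t u : G}

theorem mul_eq_of_braid6 (h : x * y * x * y * x * y = y * x * y * x * y * x)
    (hs : s = y * x * (y * x * y)⁻¹ * x) (hu : u = (x * y * x)⁻¹ * y * (x * y * x)) :
    u * s = x := by
  subst hs hu
  calc _ = x⁻¹ * y⁻¹ * x⁻¹ * (y * x * y * x * y * x) * (y⁻¹ * x⁻¹ * y⁻¹ * x) := by group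
    _ = x := by rw [← h]; group

theorem b13_relations_of_braid6 (h : x * y * x * y * x * y = y * x * y * x * y * x)
    (hs : s = y * x * (y * x * y)⁻¹ * x) (ht : t = x⁻¹ * y * x)
    (hu : u = (x * y * x)⁻¹ * y * (x * y * x)) :
    t * u * s * t = u * s * t * u ∧ s * t * u * s * t = u * s * t * u * s := by
  refine (b13_relations_iff (mul_eq_of_braid6 h hs hu)).mpr ⟨?_, ?_⟩
  · subst ht hu; group
  · exact (braid6_iff_of_mul_eq (by rw [ht]; group)).mp h

theorem bG2_generators_eq_of_braid6 (h : x * y * x * y * x * y = y * x * y * x * y * x)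
    (hs : s = y * x * (y * x * y)⁻¹ * x) (ht : t = x⁻¹ * y * x)
    (hu : u = (x * y * x)⁻¹ * y * (x * y * x)) :
    u * s = x ∧ u * s * t * (u * s)⁻¹ = y := by
  rw [mul_eq_of_braid6 h hs hu, ht]
  exact ⟨rfl, by group⟩

end

theorem bt_bu_bs_bt : bt * bu * bs * bt = bu * bs * bt * bu := by
  simp only [bs, bt, bu, PresentedGroup.of, ← map_mul]
  exact PresentedGroup.mk_eq_mk_of_mul_inv_mem (Set.mem_insert _ _)

theorem bs_bt_bu_bs_bt : bs * bt * bu * bs * bt = bu * bs * bt * bu * bs := by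
  simp only [bs, bt, bu, PresentedGroup.of, ← map_mul]
  exact PresentedGroup.mk_eq_mk_of_mul_inv_mem (Set.mem_insert_of_mem _ rfl)

theorem gx_gy_braid6 : gx * gy * gx * gy * gx * gy = gy * gx * gy * gx * gy * gx := by
  simp only [gx, gy, PresentedGroup.of, ← map_mul]
  exact PresentedGroup.mk_eq_mk_of_mul_inv_mem rfl

theorem b13rels_lift_eq_one {G : Type*} [Group G] {s t u : G}
    (h : t * u * s * t = u * s * t * u ∧ s * t * u * s * t = u * s * t * u * s) :
    ∀ r ∈ b13rels, FreeGroup.lift ![s, t, u] r = 1 := by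
  rintro r (rfl | rfl) <;> simp [h.1, h.2]

theorem bG2rels_lift_eq_one {G : Type*} [Group G] {x y : G}
    (h : x * y * x * y * x * y = y * x * y * x * y * x) :
    ∀ r ∈ bG2rels, FreeGroup.lift ![x, y] r = 1 := by
  rintro r rfl
  simp [h]

def bG2ToB13 : BG2 →* B13br :=
  PresentedGroup.toGroup <| bG2rels_lift_eq_one <|
    braid6_of_b13_relations bt_bu_bs_bt bs_bt_bu_bs_bt rfl rfl

def b13ToBG2 : B13br →* BG2 :=
  PresentedGroup.toGroup <| b13rels_lift_eq_one <|
    b13_relations_of_braid6 gx_gy_braid6 rfl rfl rfl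

theorem bG2ToB13_gx : bG2ToB13 gx = bu * bs := PresentedGroup.toGroup.of _

theorem bG2ToB13_gy : bG2ToB13 gy = bu * bs * bt * (bu * bs)⁻¹ := PresentedGroup.toGroup.of _

theorem b13ToBG2_bs : b13ToBG2 bs = gy * gx * (gy * gx * gy)⁻¹ * gx := PresentedGroup.toGroup.of _

theorem b13ToBG2_bt : b13ToBG2 bt = gx⁻¹ * gy * gx := PresentedGroup.toGroup.of _

theorem b13ToBG2_bu : b13ToBG2 bu = (gx * gy * gx)⁻¹ * gy * (gx * gy * gx) :=
  PresentedGroup.toGroup.of _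

theorem b13ToBG2_comp_bG2ToB13 : b13ToBG2.comp bG2ToB13 = MonoidHom.id BG2 := by
  obtain ⟨hx, hy⟩ := bG2_generators_eq_of_braid6 gx_gy_braid6
    b13ToBG2_bs b13ToBG2_bt b13ToBG2_bu
  refine PresentedGroup.ext fun i => ?_
  fin_cases i
  · show b13ToBG2 (bG2ToB13 gx) = gx
    rw [bG2ToB13_gx, map_mul, hx]
  · show b13ToBG2 (bG2ToB13 gy) = gy
    rw [bG2ToB13_gy, map_mul, map_mul, map_inv, map_mul, hy]

theorem bG2ToB13_comp_b13ToBG2 : bG2ToB13.comp b13ToBG2 = MonoidHom.id B13br := by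
  obtain ⟨hs, ht, hu⟩ := b13_generators_eq_of_relations bt_bu_bs_bt bs_bt_bu_bs_bt
    bG2ToB13_gx bG2ToB13_gy
  refine PresentedGroup.ext fun i => ?_
  fin_cases i
  · show bG2ToB13 (b13ToBG2 bs) = bs
    rw [b13ToBG2_bs]
    simpa only [map_mul, map_inv] using hs
  · show bG2ToB13 (b13ToBG2 bt) = bt
    rw [b13ToBG2_bt]
    simpa only [map_mul, map_inv] using ht
  · show bG2ToB13 (b13ToBG2 bu) = bu
    rw [b13ToBG2_bu]
    simpa only [map_mul, map_inv] using hu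

/-- The homomorphism `B(G₂) → B₁₃ᵇʳ` determined by `x ↦ us` and
`y ↦ (us)·t·(us)⁻¹` is well defined and is a group isomorphism, with inverse the
homomorphism determined by `s ↦ yx(yxy)⁻¹x`, `t ↦ x⁻¹yx`, `u ↦ (xyx)⁻¹y(xyx)`. -/
theorem stmt9 :
    ∃ (φ : BG2 →* B13br) (ψ : B13br →* BG2),
      φ gx = bu * bs ∧
      φ gy = (bu * bs) * bt * (bu * bs)⁻¹ ∧
      ψ bs = gy * gx * (gy * gx * gy)⁻¹ * gx ∧
      ψ bt = gx⁻¹ * gy * gx ∧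
      ψ bu = (gx * gy * gx)⁻¹ * gy * (gx * gy * gx) ∧
      (∀ g, ψ (φ g) = g) ∧ (∀ h, φ (ψ h) = h) :=
  ⟨bG2ToB13, b13ToBG2, bG2ToB13_gx, bG2ToB13_gy, b13ToBG2_bs, b13ToBG2_bt, b13ToBG2_bu,
    DFunLike.congr_fun b13ToBG2_comp_bG2ToB13, DFunLike.congr_fun bG2ToB13_comp_b13ToBG2⟩
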